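/- Let a, b, c be nonnegative reals with a + b + c = 1 and a > 0. For n ≥ 2 let P_{n,0} be the total weight of step sequences of length n−1 which, started at height 1, have height ≥ 1 after each of the first n−2 steps and height 0 after the final step, and set P_{0,0} = P_{1,0} = 0. Then for every real t with 0 < t and t·(b + 2·√(a·c)) < 1, the series ∑_{n=0}^∞ P_{n,0}·t^n converges (HasSum) to (1 − b·t − √((b·t − 1)² − 4·a·c·t²)) / (2·a). -/

import Mathlib

/-!
Let `F h = ∑ₘ Qₕ(m) tᵐ`, where `Qₕ(m)` is the weight of the paths that go from height `h` to `0`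
in exactly `m` steps without touching `0` before. Splitting off the first step gives `F 0 = 1` and
`F (h + 1) = t (a F (h + 2) + b F (h + 1) + c F h)`, a linear recurrence whose characteristic roots
are `μ, ν = (1 - b t ∓ √Δ) / (2 a t)`. A path with net descent `h` has weight `√(c/a)ʰ` times its
weight for the step weights `(√(ac), b, √(ac))`, so `F h = O(√(c/a)ʰ)`; as `√(c/a) < ν`, the
`ν`-component of `F` vanishes and `F 1 = μ`. Finally `∑ₙ P_{n,0} tⁿ = t F 1`.
-/

open Finset

/-- The step sequences of length `L`: functions `Fin L → ℤ` with every value in `{1, 0, -1}`. -/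
def stepSeqs (L : ℕ) : Finset (Fin L → ℤ) :=
  Fintype.piFinset fun _ => ({1, 0, -1} : Finset ℤ)

/-- The weight of a step sequence: `a ^ (#up steps) * b ^ (#flat steps) * c ^ (#down steps)`. -/
def seqWeight (a b c : ℝ) {L : ℕ} (s : Fin L → ℤ) : ℝ :=
  a ^ (Finset.univ.filter (fun i => s i = 1)).card *
    b ^ (Finset.univ.filter (fun i => s i = 0)).card *
      c ^ (Finset.univ.filter (fun i => s i = -1)).card

/-- The height of a step sequence after `i` steps, started at height `h`. -/
def seqHeight {L : ℕ} (h : ℤ) (s : Fin L → ℤ) (i : ℕ) : ℤ :=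
  h + ∑ j ∈ Finset.univ.filter (fun j : Fin L => (j : ℕ) < i), s j

/-- `P n 0`: for `n ≥ 2`, the total weight of step sequences of length `n-1` which, started at
height `1`, have height `≥ 1` after each of the first `n-2` steps and height `0` after the final
step (ruin exactly at size `n`); `P 0 0 = P 1 0 = 0`. -/
def ruinP (a b c : ℝ) (n : ℕ) : ℝ :=
  if 2 ≤ n then
    ∑ s ∈ (stepSeqs (n - 1)).filter
        (fun s => (∀ i ≤ n - 2, 1 ≤ seqHeight 1 s i) ∧ seqHeight 1 s (n - 1) = 0),
      seqWeight a b c s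
  else 0

lemma eq_mul_of_recurrence_of_abs_le {F : ℕ → ℝ} {μ ν γ C : ℝ}
    (hrec : ∀ n, F (n + 2) = (μ + ν) * F (n + 1) - μ * ν * F n)
    (hbound : ∀ n, |F n| ≤ C * γ ^ n) (hγ : 0 ≤ γ) (hγν : γ < ν) : F 1 = μ * F 0 := by
  have hν : 0 < ν := hγ.trans_lt hγν
  set D := F 1 - μ * F 0
  -- `F (n + 1) - μ F n` grows like `νⁿ` unless `D = 0`, but it is `O(γⁿ)` with `γ < ν`.
  have hgeom : ∀ n, F (n + 1) - μ * F n = ν ^ n * D := by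
    intro n
    induction n with
    | zero => simp [D]
    | succ n ih => rw [hrec, pow_succ]; linear_combination ν * ih
  have hle : ∀ n, |D| ≤ C * (γ + |μ|) * (γ / ν) ^ n := by
    intro n
    have hνn := pow_pos hν n
    rw [div_pow, ← mul_div_assoc, le_div_iff₀ hνn]
    calc |D| * ν ^ n = |F (n + 1) - μ * F n| := by rw [hgeom, abs_mul, abs_of_pos hνn, mul_comm]
      _ ≤ |F (n + 1)| + |μ| * |F n| := by rw [← abs_mul]; exact abs_sub _ _
      _ ≤ C * γ ^ (n + 1) + |μ| * (C * γ ^ n) := by gcongr <;> apply hbound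
      _ = C * (γ + |μ|) * γ ^ n := by ring
  have hlim : Filter.Tendsto (fun n => C * (γ + |μ|) * (γ / ν) ^ n) Filter.atTop (nhds 0) := by
    simpa using (tendsto_pow_atTop_nhds_zero_of_lt_one (div_nonneg hγ hν.le)
      ((div_lt_one hν).mpr hγν)).const_mul (C * (γ + |μ|))
  have hD : |D| ≤ 0 := ge_of_tendsto' hlim hle
  linarith [abs_nonpos_iff.mp hD]

def stepWeight (a b c : ℝ) (d : ℤ) : ℝ :=
  if d = 1 then a else if d = 0 then b else c

lemma mem_stepSeqs_cons_iff {m : ℕ} {d : ℤ} {s : Fin m → ℤ} :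
    (Fin.cons d s : Fin (m + 1) → ℤ) ∈ stepSeqs (m + 1) ↔
      d ∈ ({1, 0, -1} : Finset ℤ) ∧ s ∈ stepSeqs m := by
  simp only [stepSeqs, Fintype.mem_piFinset, Fin.forall_fin_succ, Fin.cons_zero, Fin.cons_succ]

lemma sum_stepSeqs_succ {M : Type*} [AddCommMonoid M] {m : ℕ} (f : (Fin (m + 1) → ℤ) → M) :
    ∑ s ∈ stepSeqs (m + 1), f s
      = ∑ d ∈ ({1, 0, -1} : Finset ℤ), ∑ s ∈ stepSeqs m, f (Fin.cons d s) := by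
  rw [← sum_product']
  refine sum_nbij' (fun s => (s 0, Fin.tail s)) (fun p => Fin.cons p.1 p.2) ?_ ?_ ?_ ?_ ?_
  · intro s hs
    rw [← Fin.cons_self_tail s, mem_stepSeqs_cons_iff] at hs
    simpa using hs
  · rintro ⟨d, s⟩ hp
    simpa [mem_stepSeqs_cons_iff] using hp
  all_goals simp

lemma seqWeight_eq_prod (a b c : ℝ) {L : ℕ} {s : Fin L → ℤ} (hs : s ∈ stepSeqs L) :
    seqWeight a b c s = ∏ i, stepWeight a b c (s i) := by
  have split : ∀ i, stepWeight a b c (s i) = (if s i = 1 then a else 1) *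
      (if s i = 0 then b else 1) * (if s i = -1 then c else 1) := by
    intro i
    have := Fintype.mem_piFinset.mp hs i
    simp only [mem_insert, mem_singleton] at this
    rcases this with h | h | h <;> simp [h, stepWeight]
  simp only [split, prod_mul_distrib, prod_ite, prod_const, one_pow, mul_one, seqWeight]

lemma seqWeight_cons (a b c : ℝ) {m : ℕ} {d : ℤ} {s : Fin m → ℤ}
    (hd : d ∈ ({1, 0, -1} : Finset ℤ)) (hs : s ∈ stepSeqs m) :
    seqWeight a b c (Fin.cons d s : Fin (m + 1) → ℤ) = stepWeight a b c d * seqWeight a b c s := by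
  rw [seqWeight_eq_prod a b c (mem_stepSeqs_cons_iff.mpr ⟨hd, hs⟩), seqWeight_eq_prod a b c hs,
    Fin.prod_univ_succ]
  simp

lemma sum_seqWeight_stepSeqs (a b c : ℝ) (L : ℕ) :
    ∑ s ∈ stepSeqs L, seqWeight a b c s = (a + b + c) ^ L := by
  rw [sum_congr rfl fun s hs => seqWeight_eq_prod a b c hs, stepSeqs, sum_prod_piFinset]
  simp [stepWeight, add_assoc]

lemma sum_eq_card_sub_card {L : ℕ} {s : Fin L → ℤ} (hs : s ∈ stepSeqs L) :
    ∑ i, s i = (#{i | s i = 1} : ℤ) - #{i | s i = -1} := by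
  have split : ∀ i, s i = (if s i = 1 then 1 else 0) - (if s i = -1 then 1 else 0) := by
    intro i
    have := Fintype.mem_piFinset.mp hs i
    simp only [mem_insert, mem_singleton] at this
    rcases this with h | h | h <;> simp [h]
  rw [sum_congr rfl fun i _ => split i, sum_sub_distrib, sum_boole, sum_boole]

lemma seqHeight_zero {L : ℕ} (h : ℤ) (s : Fin L → ℤ) : seqHeight h s 0 = h := by
  simp [seqHeight]

lemma seqHeight_length {L : ℕ} (h : ℤ) (s : Fin L → ℤ) : seqHeight h s L = h + ∑ i, s i := by
  simp [seqHeight]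

lemma seqHeight_cons {m : ℕ} (h d : ℤ) (s : Fin m → ℤ) (i : ℕ) :
    seqHeight h (Fin.cons d s : Fin (m + 1) → ℤ) (i + 1) = seqHeight (h + d) s i := by
  simp only [seqHeight, sum_filter, Fin.sum_univ_succ]
  simp [add_assoc]

def IsFirstPassage {m : ℕ} (h : ℤ) (s : Fin m → ℤ) : Prop :=
  (∀ i < m, 1 ≤ seqHeight h s i) ∧ seqHeight h s m = 0

instance {m : ℕ} (h : ℤ) : DecidablePred (IsFirstPassage (m := m) h) :=
  fun _ => inferInstanceAs (Decidable (_ ∧ _))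

lemma isFirstPassage_cons_iff {m : ℕ} {h : ℤ} (hh : 1 ≤ h) (d : ℤ) (s : Fin m → ℤ) :
    IsFirstPassage h (Fin.cons d s : Fin (m + 1) → ℤ) ↔ IsFirstPassage (h + d) s := by
  simp only [IsFirstPassage, seqHeight_cons, Nat.forall_lt_succ_left, seqHeight_zero, hh,
    true_and]

def firstPassageWeight (a b c : ℝ) (h : ℤ) (m : ℕ) : ℝ :=
  ∑ s ∈ (stepSeqs m).filter (IsFirstPassage h), seqWeight a b c s

lemma firstPassageWeight_zero_length (a b c : ℝ) (h : ℤ) :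
    firstPassageWeight a b c h 0 = if h = 0 then 1 else 0 := by
  simp [firstPassageWeight, IsFirstPassage, seqHeight_zero, stepSeqs, seqWeight, filter_singleton]
  split_ifs <;> simp

lemma firstPassageWeight_zero_height_succ (a b c : ℝ) (m : ℕ) :
    firstPassageWeight a b c 0 (m + 1) = 0 := by
  refine sum_eq_zero fun s hs => absurd (mem_filter.mp hs).2.1 fun hall => ?_
  simpa [seqHeight_zero] using hall 0 m.succ_pos

lemma firstPassageWeight_succ (a b c : ℝ) {h : ℤ} (hh : 1 ≤ h) (m : ℕ) :
    firstPassageWeight a b c h (m + 1) = a * firstPassageWeight a b c (h + 1) m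
      + b * firstPassageWeight a b c h m + c * firstPassageWeight a b c (h - 1) m := by
  have first_step : ∀ d ∈ ({1, 0, -1} : Finset ℤ),
      ∑ s ∈ stepSeqs m, (if IsFirstPassage h (Fin.cons d s : Fin (m + 1) → ℤ)
        then seqWeight a b c (Fin.cons d s : Fin (m + 1) → ℤ) else 0)
        = stepWeight a b c d * firstPassageWeight a b c (h + d) m := by
    intro d hd
    rw [firstPassageWeight, sum_filter, mul_sum]
    refine sum_congr rfl fun s hs => ?_
    simp only [isFirstPassage_cons_iff hh, seqWeight_cons a b c hd hs, mul_ite, mul_zero]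
  rw [firstPassageWeight, sum_filter, sum_stepSeqs_succ, sum_congr rfl first_step]
  simp [stepWeight, sub_eq_add_neg, add_assoc]

lemma ruinP_succ (a b c : ℝ) (m : ℕ) : ruinP a b c (m + 1) = firstPassageWeight a b c 1 m := by
  rcases m with _ | m
  · simp [ruinP, firstPassageWeight_zero_length]
  · rw [ruinP, if_pos (by omega), firstPassageWeight]
    refine sum_congr (filter_congr fun s _ => ?_) fun _ _ => rfl
    simp only [IsFirstPassage, Nat.lt_succ_iff, show m + 1 + 1 - 2 = m by omega]
    rfl

lemma firstPassageWeight_nonneg {a b c : ℝ} (ha : 0 ≤ a) (hb : 0 ≤ b) (hc : 0 ≤ c)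
    (h : ℤ) (m : ℕ) : 0 ≤ firstPassageWeight a b c h m :=
  sum_nonneg fun _ _ => by unfold seqWeight; positivity

lemma seqWeight_eq_of_sum_eq_neg {a b c γ β : ℝ} (hγβ : γ * β = c) (hβ : β ^ 2 = a * c)
    {L : ℕ} {s : Fin L → ℤ} (hs : s ∈ stepSeqs L) {h : ℕ} (hsum : ∑ i, s i = -h) :
    seqWeight a b c s = γ ^ h * seqWeight β b β s := by
  rw [seqWeight, seqWeight]
  have hdown : #{i | s i = -1} = #{i | s i = 1} + h := by
    have := sum_eq_card_sub_card hs
    omega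
  rw [hdown]
  set u := #{i | s i = 1}
  set z := #{i | s i = 0}
  calc a ^ u * b ^ z * c ^ (u + h) = b ^ z * (a * c) ^ u * c ^ h := by ring
    _ = b ^ z * (β ^ 2) ^ u * (γ * β) ^ h := by rw [hβ, hγβ]
    _ = γ ^ h * (β ^ u * b ^ z * β ^ (u + h)) := by ring

lemma firstPassageWeight_le {a b c γ β : ℝ} (hb : 0 ≤ b) (hγ : 0 ≤ γ) (hβ : 0 ≤ β)
    (hγβ : γ * β = c) (hβ2 : β ^ 2 = a * c) (h m : ℕ) :
    firstPassageWeight a b c h m ≤ γ ^ h * (b + 2 * β) ^ m := by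
  have tilt : ∀ s ∈ (stepSeqs m).filter (IsFirstPassage h),
      seqWeight a b c s = γ ^ h * seqWeight β b β s := by
    intro s hs
    obtain ⟨hs, -, hend⟩ := mem_filter.mp hs
    rw [seqHeight_length] at hend
    exact seqWeight_eq_of_sum_eq_neg hγβ hβ2 hs (by omega)
  calc firstPassageWeight a b c h m
      = γ ^ h * ∑ s ∈ (stepSeqs m).filter (IsFirstPassage h), seqWeight β b β s := by
        rw [firstPassageWeight, sum_congr rfl tilt, mul_sum]
    _ ≤ γ ^ h * ∑ s ∈ stepSeqs m, seqWeight β b β s := by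
        gcongr
        · exact fun _ _ _ => by unfold seqWeight; positivity
        · exact filter_subset _ _
    _ = γ ^ h * (b + 2 * β) ^ m := by rw [sum_seqWeight_stepSeqs]; ring

noncomputable def firstPassageGF (a b c t : ℝ) (h : ℕ) : ℝ :=
  ∑' m, firstPassageWeight a b c h m * t ^ m

section GeneratingFunction

variable {a b c t : ℝ}

lemma hasSum_ruinP_mul_pow (hsum : Summable fun m => firstPassageWeight a b c 1 m * t ^ m) :
    HasSum (fun n => ruinP a b c n * t ^ n) (t * firstPassageGF a b c t 1) := by
  have hshift : HasSum (fun n => ruinP a b c (n + 1) * t ^ (n + 1))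
      (t * firstPassageGF a b c t 1) := by
    rw [firstPassageGF, Nat.cast_one]
    refine (hsum.hasSum.mul_left t).congr_fun fun n => ?_
    rw [ruinP_succ, pow_succ]
    ring
  have hzero : ruinP a b c 0 = 0 := if_neg (by norm_num)
  simpa [hzero] using hshift.zero_add (f := fun n => ruinP a b c n * t ^ n)

lemma firstPassageGF_zero : firstPassageGF a b c t 0 = 1 := by
  rw [firstPassageGF, tsum_eq_single 0]
  · simp [firstPassageWeight_zero_length]
  · rintro (_ | m) hm
    · contradiction
    · simp [firstPassageWeight_zero_height_succ]

lemma firstPassageGF_succ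
    (hsum : ∀ h : ℕ, Summable fun m => firstPassageWeight a b c h m * t ^ m) (h : ℕ) :
    firstPassageGF a b c t (h + 1) = t * (a * firstPassageGF a b c t (h + 2)
      + b * firstPassageGF a b c t (h + 1) + c * firstPassageGF a b c t h) := by
  have hrec : ∀ m, firstPassageWeight a b c (h + 1 : ℕ) (m + 1) * t ^ (m + 1)
      = t * (a * (firstPassageWeight a b c (h + 2 : ℕ) m * t ^ m)
        + b * (firstPassageWeight a b c (h + 1 : ℕ) m * t ^ m)
        + c * (firstPassageWeight a b c h m * t ^ m)) := by
    intro m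
    have e2 : ((h + 1 : ℕ) : ℤ) + 1 = (h + 2 : ℕ) := by push_cast; ring
    have e0 : ((h + 1 : ℕ) : ℤ) - 1 = h := by push_cast; ring
    rw [firstPassageWeight_succ a b c (by omega), e2, e0, pow_succ]
    ring
  have htail : HasSum (fun m => firstPassageWeight a b c (h + 1 : ℕ) (m + 1) * t ^ (m + 1))
      (t * (a * firstPassageGF a b c t (h + 2) + b * firstPassageGF a b c t (h + 1)
        + c * firstPassageGF a b c t h)) := by
    simp only [hrec]
    exact ((((hsum _).hasSum.mul_left a).add ((hsum _).hasSum.mul_left b)).add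
      ((hsum _).hasSum.mul_left c)).mul_left t
  have h0 : firstPassageWeight a b c (h + 1 : ℕ) 0 = 0 := by
    rw [firstPassageWeight_zero_length, if_neg (by omega)]
  have hall := htail.zero_add (f := fun m => firstPassageWeight a b c (h + 1 : ℕ) m * t ^ m)
  simp only [h0, zero_mul, zero_add] at hall
  exact hall.tsum_eq

lemma sqrt_div_mul_sqrt_mul (ha : 0 < a) (hc : 0 ≤ c) : √(c / a) * √(a * c) = c := by
  rw [← Real.sqrt_mul (div_nonneg hc ha.le), show c / a * (a * c) = c ^ 2 by field_simp,
    Real.sqrt_sq hc]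

lemma mul_sqrt_div (ha : 0 < a) : a * √(c / a) = √(a * c) := by
  rw [Real.sqrt_div' c ha.le, mul_div_assoc', mul_div_right_comm, Real.div_sqrt,
    ← Real.sqrt_mul ha.le]

lemma firstPassageWeight_mul_pow_le (ha : 0 < a) (hb : 0 ≤ b) (hc : 0 ≤ c) (ht : 0 ≤ t)
    (h m : ℕ) :
    firstPassageWeight a b c h m * t ^ m ≤ √(c / a) ^ h * (t * (b + 2 * √(a * c))) ^ m := by
  have hQ := firstPassageWeight_le hb (Real.sqrt_nonneg _) (Real.sqrt_nonneg _)
    (sqrt_div_mul_sqrt_mul ha hc) (Real.sq_sqrt (by positivity)) h m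
  calc firstPassageWeight a b c h m * t ^ m ≤ √(c / a) ^ h * (b + 2 * √(a * c)) ^ m * t ^ m := by
        gcongr
    _ = √(c / a) ^ h * (t * (b + 2 * √(a * c))) ^ m := by rw [mul_pow]; ring

lemma firstPassageWeight_mul_pow_nonneg (ha : 0 ≤ a) (hb : 0 ≤ b) (hc : 0 ≤ c) (ht : 0 ≤ t)
    (h : ℤ) (m : ℕ) : 0 ≤ firstPassageWeight a b c h m * t ^ m :=
  mul_nonneg (firstPassageWeight_nonneg ha hb hc h m) (pow_nonneg ht m)

lemma summable_firstPassageWeight_mul_pow (ha : 0 < a) (hb : 0 ≤ b) (hc : 0 ≤ c) (ht : 0 ≤ t)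
    (hr : t * (b + 2 * √(a * c)) < 1) (h : ℕ) :
    Summable fun m => firstPassageWeight a b c h m * t ^ m :=
  .of_nonneg_of_le (firstPassageWeight_mul_pow_nonneg ha.le hb hc ht h)
    (firstPassageWeight_mul_pow_le ha hb hc ht h)
    ((summable_geometric_of_lt_one (by positivity) hr).mul_left _)

lemma firstPassageGF_nonneg (ha : 0 ≤ a) (hb : 0 ≤ b) (hc : 0 ≤ c) (ht : 0 ≤ t) (h : ℕ) :
    0 ≤ firstPassageGF a b c t h :=
  tsum_nonneg (firstPassageWeight_mul_pow_nonneg ha hb hc ht h)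

lemma firstPassageGF_le (ha : 0 < a) (hb : 0 ≤ b) (hc : 0 ≤ c) (ht : 0 ≤ t)
    (hr : t * (b + 2 * √(a * c)) < 1) (h : ℕ) :
    firstPassageGF a b c t h ≤ (1 - t * (b + 2 * √(a * c)))⁻¹ * √(c / a) ^ h := by
  have hgeom := summable_geometric_of_lt_one (by positivity) hr
  calc firstPassageGF a b c t h ≤ ∑' m, √(c / a) ^ h * (t * (b + 2 * √(a * c))) ^ m :=
        (summable_firstPassageWeight_mul_pow ha hb hc ht hr h).tsum_le_tsum
          (firstPassageWeight_mul_pow_le ha hb hc ht h) (hgeom.mul_left _)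
    _ = (1 - t * (b + 2 * √(a * c)))⁻¹ * √(c / a) ^ h := by
        rw [tsum_mul_left, tsum_geometric_of_lt_one (by positivity) hr, mul_comm]

lemma discriminant_eq (ha : 0 ≤ a) (hc : 0 ≤ c) :
    (b * t - 1) ^ 2 - 4 * a * c * t ^ 2
      = (1 - t * (b + 2 * √(a * c))) * (1 - t * (b + 2 * √(a * c)) + 4 * t * √(a * c)) := by
  linear_combination (4 * t ^ 2) * Real.sq_sqrt (mul_nonneg ha hc)

lemma discriminant_nonneg (ha : 0 ≤ a) (hc : 0 ≤ c) (ht : 0 ≤ t)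
    (hr : t * (b + 2 * √(a * c)) < 1) : 0 ≤ (b * t - 1) ^ 2 - 4 * a * c * t ^ 2 := by
  have := mul_nonneg ht (Real.sqrt_nonneg (a * c))
  rw [discriminant_eq ha hc]
  exact mul_nonneg (by linarith) (by linarith)

lemma sqrt_div_lt_root (ha : 0 < a) (ht : 0 < t) (hr : t * (b + 2 * √(a * c)) < 1) {s : ℝ}
    (hs : 0 ≤ s) : √(c / a) < (1 - b * t + s) / (2 * a * t) := by
  rw [lt_div_iff₀ (by positivity)]
  calc √(c / a) * (2 * a * t) = 2 * t * √(a * c) := by rw [← mul_sqrt_div ha]; ring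
    _ < 1 - b * t + s := by linarith

lemma firstPassageGF_add_two (ha : 0 < a) (ht : 0 < t) {s : ℝ}
    (hs : s ^ 2 = (b * t - 1) ^ 2 - 4 * a * c * t ^ 2)
    (hsum : ∀ h : ℕ, Summable fun m => firstPassageWeight a b c h m * t ^ m) (n : ℕ) :
    firstPassageGF a b c t (n + 2)
      = ((1 - b * t - s) / (2 * a * t) + (1 - b * t + s) / (2 * a * t))
          * firstPassageGF a b c t (n + 1)
        - (1 - b * t - s) / (2 * a * t) * ((1 - b * t + s) / (2 * a * t))
          * firstPassageGF a b c t n := by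
  have hroots_add : (1 - b * t - s) / (2 * a * t) + (1 - b * t + s) / (2 * a * t)
      = (1 - b * t) / (a * t) := by field_simp; ring
  have hroots_mul : (1 - b * t - s) / (2 * a * t) * ((1 - b * t + s) / (2 * a * t))
      = c / a := by field_simp; linear_combination (-1) * hs
  rw [hroots_add, hroots_mul]
  field_simp
  linear_combination (-1) * firstPassageGF_succ hsum n

end GeneratingFunction

theorem ruin_generating_function_general (a b c : ℝ)
    (hb : 0 ≤ b) (hc : 0 ≤ c) (ha' : 0 < a)
    (t : ℝ) (ht : 0 < t) (ht1 : t * (b + 2 * Real.sqrt (a * c)) < 1) :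
    HasSum (fun n : ℕ => ruinP a b c n * t ^ n)
      ((1 - b * t - Real.sqrt ((b * t - 1) ^ 2 - 4 * a * c * t ^ 2)) / (2 * a)) := by
  set s := √((b * t - 1) ^ 2 - 4 * a * c * t ^ 2)
  have hs : s ^ 2 = (b * t - 1) ^ 2 - 4 * a * c * t ^ 2 :=
    Real.sq_sqrt (discriminant_nonneg ha'.le hc ht.le ht1)
  have hsum := summable_firstPassageWeight_mul_pow ha' hb hc ht.le ht1
  have hF1 : firstPassageGF a b c t 1 = (1 - b * t - s) / (2 * a * t) := by
    have := eq_mul_of_recurrence_of_abs_le (F := fun n => firstPassageGF a b c t n)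
      (firstPassageGF_add_two ha' ht hs hsum)
      (fun n => (abs_of_nonneg (firstPassageGF_nonneg ha'.le hb hc ht.le n)).trans_le
        (firstPassageGF_le ha' hb hc ht.le ht1 n))
      (Real.sqrt_nonneg _) (sqrt_div_lt_root ha' ht ht1 (Real.sqrt_nonneg _))
    simpa [firstPassageGF_zero] using this
  rw [show (1 - b * t - s) / (2 * a) = t * firstPassageGF a b c t 1 by rw [hF1]; field_simp]
  exact hasSum_ruinP_mul_pow (hsum 1)

/-- the gambler's-ruin generating function
`G(t) = ∑_n P_{n,0} t^n = (1 - b t - √((b t - 1)² - 4 a c t²)) / (2 a)`. -/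
theorem ruin_generating_function (a b c : ℝ)
    (ha : 0 ≤ a) (hb : 0 ≤ b) (hc : 0 ≤ c) (habc : a + b + c = 1) (ha' : 0 < a)
    (t : ℝ) (ht : 0 < t) (ht1 : t * (b + 2 * Real.sqrt (a * c)) < 1) :
    HasSum (fun n : ℕ => ruinP a b c n * t ^ n)
      ((1 - b * t - Real.sqrt ((b * t - 1) ^ 2 - 4 * a * c * t ^ 2)) / (2 * a)) :=
  ruin_generating_function_general a b c hb hc ha' t ht ht1
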